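/- Let Ω = (1/h)R dt, R = (r_{α,β}), be an adapted family of connection 1-forms, let P be a monic differential operator of order N−1 in hD, and let P₀,…,P_{N−2} be differential operators with P₀ = 1 such that for every 0 ≤ β ≤ N−2 there exists a differential operator S_β with (hD)∘P_β − Σ_{α=0}^{N−2} r_{α,β}·P_α = S_β∘P. Let U = (u_{α,β}) be an adapted gauge transformation, and define P′_β := Σ_{α=0}^{N−2} u_{α,β}·P_α (the coefficient u_{α,β} acting by multiplication on the left) and R′ = (r′_{α,β}) := U⁻¹RU + h q U⁻¹(∂U/∂q). Then for every 0 ≤ β ≤ N−2 there exists a differential operator S′_β with (hD)∘P′_β − Σ_{α=0}^{N−2} r′_{α,β}·P′_α = S′_β∘P; that is, the change of adapted basis by U transforms the connection form by the adapted gauge action. -/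
import Mathlib


open MvPolynomial Matrix Finset

noncomputable section

/-- `ℂ[q,h]`: variable `0` is `q`, variable `1` is `h`. -/
abbrev PQH : Type := MvPolynomial (Fin 2) ℂ

/-- weights: `deg q = 2(N-k)`, `deg h = 2`. -/
def wt (N k : ℕ) : Fin 2 → ℤ := ![2 * ((N : ℤ) - (k : ℤ)), 2]

/-- weighted-homogeneous of degree `d`. -/
def IsHom (N k : ℕ) (p : PQH) (d : ℤ) : Prop :=
  p.IsWeightedHomogeneous (wt N k) d

/-- substitution `q = 0`. -/
def q0 : PQH →ₐ[ℂ] PQH := aeval ![0, X 1]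

abbrev Mat (N : ℕ) := Matrix (Fin (N - 1)) (Fin (N - 1)) PQH

/-- the matrix `I₋₁`: entries `(i+1, i)` equal to `1`, all other entries `0`. -/
def Im1 (N : ℕ) : Mat N := fun i j => if (i : ℕ) = (j : ℕ) + 1 then 1 else 0

/-- adapted gauge transformation: entries weighted-homogeneous of degree `2(j-i)`,
and `U(0,h) = I`. -/
structure IsAdaptedGauge (N k : ℕ) (U : Mat N) : Prop where
  homog : ∀ i j, IsHom N k (U i j) (2 * ((j : ℤ) - (i : ℤ)))
  init : U.map ⇑q0 = 1

/-- adapted family of connection 1-forms `Ω = (1/h) R dt`, as a condition on `R`: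
entries weighted-homogeneous of degree `2(j-i)+2`, `R(0,h) = I₋₁`, and all
`(i+1,i)` entries equal to `1`. -/
structure IsAdaptedConn (N k : ℕ) (R : Mat N) : Prop where
  homog : ∀ i j, IsHom N k (R i j) (2 * ((j : ℤ) - (i : ℤ)) + 2)
  init : R.map ⇑q0 = Im1 N
  subdiag : ∀ i j : Fin (N - 1), (i : ℕ) = (j : ℕ) + 1 → R i j = 1

/-- `h⁻¹`-linear: the variable `h` does not occur in the entries of `R`. -/
def IsHinvLinear (N : ℕ) (R : Mat N) : Prop :=
  ∀ i j, ∀ m ∈ (R i j).support, m 1 = 0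

/-- the gauge action `U*Ω` on the level of the matrix `R`:
`R' = U⁻¹ R U + h q U⁻¹ (∂U/∂q)`. -/
def gaugeAct (N : ℕ) (U R : Mat N) : Mat N :=
  U⁻¹ * R * U + (X 1 * X 0 : PQH) • (U⁻¹ * U.map (fun p => pderiv 0 p))

/-- the derivation `D = q d/dq` of `ℂ[q,h]`, as a `ℂ`-linear endomorphism. -/
def Dop : Module.End ℂ PQH := (LinearMap.mulLeft ℂ (X 0 : PQH)) ∘ₗ (pderiv 0).toLinearMap

/-- multiplication by a polynomial, as a differential operator. -/
def mulOp (c : PQH) : Module.End ℂ PQH := LinearMap.mulLeft ℂ c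

/-- the operator `hD`. -/
def hD : Module.End ℂ PQH := mulOp (X 1) * Dop

/-- the operators attached to an adapted family `Ω = (1/h) R dt`: `P₀ = 1`,
`P_{β+1} = (hD)∘P_β − Σ_{α=0}^{β} r_{α,β}·P_α`; `Pops N R (N-1)` is the reduced
operator of `Ω`. -/
def Pops (N : ℕ) (R : Mat N) : ℕ → Module.End ℂ PQH
  | 0 => 1
  | β + 1 =>
      hD * Pops N R β -
        ∑ α : Fin (β + 1),
          (if h : (α : ℕ) < N - 1 ∧ β < N - 1 then
            mulOp (R ⟨α, h.1⟩ ⟨β, h.2⟩) * Pops N R α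
          else 0)
  termination_by β => β
  decreasing_by
  · exact Nat.lt_succ_self β
  · exact α.is_lt

/-- `σ_{β,γ}` attached to an adapted family `R`:
`σ_{0,0} = 1`, `σ_{β+1,γ} = σ_{β,γ−1} + q h ∂σ_{β,γ}/∂q − Σ_{α=γ}^{β} r_{α,β} σ_{α,γ}`,
with the conventions `σ_{β,γ} = 0` for `γ < 0` or `γ > β` (which this definition obeys). -/
def sigmaC (N : ℕ) (R : Mat N) : ℕ → ℕ → PQH
  | 0, 0 => 1
  | 0, _ + 1 => 0
  | β + 1, γ =>
      (match γ with
        | 0 => 0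
        | γ' + 1 => sigmaC N R β γ') +
      X 0 * X 1 * pderiv 0 (sigmaC N R β γ) -
      ∑ α : Fin (β + 1),
        (if h : γ ≤ (α : ℕ) ∧ (α : ℕ) < N - 1 ∧ β < N - 1 then
          R ⟨α, h.2.1⟩ ⟨β, h.2.2⟩ * sigmaC N R α γ
        else 0)
  termination_by β _ => β
  decreasing_by
  · exact Nat.lt_succ_self β
  · exact Nat.lt_succ_self β
  · exact α.is_lt

/-- the integers `λᵢᵏ` defined by `k ∏_{j=1}^{k-1} (kX+j) = Σᵢ λᵢᵏ Xⁱ`. -/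
def lam (k i : ℕ) : ℤ :=
  ((k : Polynomial ℤ) *
    ∏ j ∈ Finset.Icc 1 (k - 1),
      ((k : Polynomial ℤ) * Polynomial.X + (j : Polynomial ℤ))).coeff i

/-- the Picard–Fuchs operator
`P^{N,k} = (hD)^{N−1} − q (λ_{k−1}(hD)^{k−1} + λ_{k−2} h (hD)^{k−2} + ⋯ + λ₀ h^{k−1})`. -/
def PNK (N k : ℕ) : Module.End ℂ PQH :=
  hD ^ (N - 1) -
    ∑ i ∈ Finset.range k,
      mulOp (C ((lam k i : ℤ) : ℂ) * X 0 * X 1 ^ (k - 1 - i)) * hD ^ i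


lemma wt_pos (N k : ℕ) (hNk : k < N) : ∀ i, 0 < wt N k i := by
  intro i
  fin_cases i <;> simp [wt]
  omega

lemma weight_nonneg (N k : ℕ) (hNk : k < N) (m : Fin 2 →₀ ℕ) :
    0 ≤ (Finsupp.weight (wt N k) m : ℤ) := by
  rw [Finsupp.weight_apply]
  apply Finset.sum_nonneg
  intro i _
  have := (wt_pos N k hNk i).le
  simpa [nsmul_eq_mul] using mul_nonneg (by positivity) this

lemma weight_eq_zero (N k : ℕ) (hNk : k < N) (m : Fin 2 →₀ ℕ)
    (h : Finsupp.weight (wt N k) m = 0) : m = 0 := by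
  rw [Finsupp.weight_apply] at h
  have hz : ∀ i ∈ m.support, (m i) • wt N k i = 0 := by
    rw [← Finset.sum_eq_zero_iff_of_nonneg]
    · exact h
    · intro i _
      have := (wt_pos N k hNk i).le
      simpa [nsmul_eq_mul] using mul_nonneg (by positivity) this
  ext i
  by_contra hi
  have hmem : i ∈ m.support := Finsupp.mem_support_iff.2 (by simpa using hi)
  have := hz i hmem
  rcases (by simpa [nsmul_eq_mul] using this : (m i : ℤ) = 0 ∨ wt N k i = 0) with h1 | h2
  · exact hi (by exact_mod_cast h1)
  · exact absurd h2 (wt_pos N k hNk i).ne'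

lemma hom_neg (N k : ℕ) (hNk : k < N) {p : PQH} {d : ℤ} (h : IsHom N k p d)
    (hd : d < 0) : p = 0 := by
  ext m
  by_contra hc
  have := h (by simpa using hc)
  have := weight_nonneg N k hNk m
  omega

lemma hom_zero (N k : ℕ) (hNk : k < N) {p : PQH} (h : IsHom N k p 0) :
    ∃ c : ℂ, p = C c := by
  refine ⟨coeff 0 p, ?_⟩
  ext m
  rcases eq_or_ne m 0 with rfl | hm
  · simp
  · rw [coeff_C, if_neg (Ne.symm hm)]
    by_contra hc
    exact hm (weight_eq_zero N k hNk m (h (by simpa using hc)))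

lemma gauge_triangular (N k : ℕ) (hNk : k < N) (U : Mat N) (hU : IsAdaptedGauge N k U) :
    U.BlockTriangular id := by
  intro i j hij
  apply hom_neg N k hNk (hU.homog i j)
  have : (j : ℤ) < (i : ℤ) := by exact_mod_cast (show (j:ℕ) < (i:ℕ) from hij)
  omega

lemma gauge_diag (N k : ℕ) (hNk : k < N) (U : Mat N) (hU : IsAdaptedGauge N k U)
    (i : Fin (N - 1)) : U i i = 1 := by
  obtain ⟨c, hc⟩ := hom_zero N k hNk (by simpa using hU.homog i i)
  have h1 : q0 (U i i) = 1 := by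
    have := congrFun (congrFun hU.init i) i
    simpa [Matrix.map_apply, Matrix.one_apply] using this
  rw [hc] at h1 ⊢
  rw [show q0 (C c) = C c from by simp [q0, algebraMap_eq]] at h1
  exact h1

lemma gauge_mul_inv (N k : ℕ) (hNk : k < N) (U : Mat N) (hU : IsAdaptedGauge N k U) :
    U * U⁻¹ = 1 := by
  apply Matrix.mul_nonsing_inv
  have : U.det = 1 := by
    rw [Matrix.det_of_upperTriangular (gauge_triangular N k hNk U hU)]
    simp [gauge_diag N k hNk U hU]
  rw [this]
  exact isUnit_one

lemma mulOp_mul (a b : PQH) : mulOp (a * b) = mulOp a * mulOp b := by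
  ext f
  simp [mulOp, mul_assoc]

lemma mulOp_add (a b : PQH) : mulOp (a + b) = mulOp a + mulOp b := by
  ext f
  simp [mulOp, add_mul]

lemma mulOp_sum {ι : Type*} (s : Finset ι) (f : ι → PQH) :
    mulOp (∑ i ∈ s, f i) = ∑ i ∈ s, mulOp (f i) := by
  ext x
  simp [mulOp, Finset.sum_mul]

lemma hD_mulOp (c : PQH) :
    hD * mulOp c = mulOp (X 1 * X 0 * pderiv 0 c) + mulOp c * hD := by
  apply LinearMap.ext
  intro f
  show (X 1 : PQH) * (X 0 * pderiv 0 (c * f)) =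
    (X 1 * X 0 * pderiv 0 c) * f + c * (X 1 * (X 0 * pderiv 0 f))
  rw [pderiv_mul]
  ring

/-- **Change of adapted basis transforms the connection by the gauge action.**
Let `Ω = (1/h)R dt` be adapted, `P` monic of order `N−1` in `hD`, and `P₀,…,P_{N−2}`
operators with `P₀ = 1` satisfying `(hD)∘P_β − Σ_α r_{α,β} P_α ∈ (P)`.  If `U` is an
adapted gauge transformation, `P′_β := Σ_α u_{α,β} P_α` and
`R′ := U⁻¹RU + hq U⁻¹(∂U/∂q)`, then `(hD)∘P′_β − Σ_α r′_{α,β} P′_α ∈ (P)` for all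
`β`. -/
theorem change_of_adapted_basis_is_gauge_action
    (N k : ℕ) (hk : 2 ≤ k) (hNk : k < N)
    (R : Mat N) (hR : IsAdaptedConn N k R)
    (b : ℕ → PQH) (P : Module.End ℂ PQH)
    (hP : P = hD ^ (N - 1) + ∑ γ ∈ Finset.range (N - 1), mulOp (b γ) * hD ^ γ)
    (Pb : Fin (N - 1) → Module.End ℂ PQH)
    (hPb0 : Pb ⟨0, by omega⟩ = 1)
    (hrel : ∀ β : Fin (N - 1), ∃ S : Module.End ℂ PQH,
      hD * Pb β - (∑ α : Fin (N - 1), mulOp (R α β) * Pb α) = S * P)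
    (U : Mat N) (hU : IsAdaptedGauge N k U) :
    ∀ β : Fin (N - 1), ∃ S' : Module.End ℂ PQH,
      hD * (∑ α : Fin (N - 1), mulOp (U α β) * Pb α) -
        (∑ α : Fin (N - 1), mulOp (gaugeAct N U R α β) *
          (∑ α' : Fin (N - 1), mulOp (U α' α) * Pb α')) = S' * P := by
  intro β
  classical
  choose S hS using hrel
  refine ⟨∑ α : Fin (N - 1), mulOp (U α β) * S α, ?_⟩
  have hUU : U * U⁻¹ = 1 := gauge_mul_inv N k hNk U hU
  set R' := gaugeAct N U R with hR'
  have hcan : ∀ M : Mat N, U * (U⁻¹ * M) = M := by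
    intro M
    rw [← Matrix.mul_assoc, hUU, Matrix.one_mul]
  have hkey : ∀ γ : Fin (N - 1), (∑ α : Fin (N - 1), U γ α * R' α β)
      = (∑ α : Fin (N - 1), R γ α * U α β) + X 1 * X 0 * pderiv 0 (U γ β) := by
    intro γ
    have h1 : U * R' = R * U + (X 1 * X 0 : PQH) • U.map (fun p => pderiv 0 p) := by
      rw [hR', gaugeAct, Matrix.mul_add, Matrix.mul_smul, Matrix.mul_assoc U⁻¹ R U,
        hcan, hcan]
    have h2 := congrFun (congrFun h1 γ) β
    simpa [Matrix.mul_apply, Matrix.add_apply, Matrix.map_apply, smul_eq_mul] using h2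
  have hPbα : ∀ α : Fin (N - 1),
      hD * Pb α = S α * P + ∑ γ : Fin (N - 1), mulOp (R γ α) * Pb γ :=
    fun α => sub_eq_iff_eq_add.mp (hS α)
  have e1 : hD * (∑ α : Fin (N - 1), mulOp (U α β) * Pb α)
      = (∑ α : Fin (N - 1), mulOp (X 1 * X 0 * pderiv 0 (U α β)) * Pb α)
        + (∑ α : Fin (N - 1), mulOp (U α β) * S α) * P
        + ∑ α : Fin (N - 1), ∑ γ : Fin (N - 1), mulOp (U α β) * (mulOp (R γ α) * Pb γ) := by
    rw [Finset.mul_sum, Finset.sum_mul, ← Finset.sum_add_distrib, ← Finset.sum_add_distrib]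
    refine Finset.sum_congr rfl fun α _ => ?_
    rw [← mul_assoc, hD_mulOp (U α β), add_mul, mul_assoc (mulOp (U α β)) hD (Pb α), hPbα α,
      mul_add, Finset.mul_sum, ← mul_assoc (mulOp (U α β)) (S α) P]
    abel
  have e2 : (∑ α : Fin (N - 1), mulOp (R' α β) *
        ∑ γ : Fin (N - 1), mulOp (U γ α) * Pb γ)
      = (∑ γ : Fin (N - 1), mulOp (X 1 * X 0 * pderiv 0 (U γ β)) * Pb γ)
        + ∑ α : Fin (N - 1), ∑ γ : Fin (N - 1), mulOp (U α β) * (mulOp (R γ α) * Pb γ) := by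
    have l1 : (∑ α : Fin (N - 1), mulOp (R' α β) *
          ∑ γ : Fin (N - 1), mulOp (U γ α) * Pb γ)
        = ∑ γ : Fin (N - 1), mulOp (∑ α : Fin (N - 1), U γ α * R' α β) * Pb γ := by
      simp_rw [Finset.mul_sum, mulOp_sum, Finset.sum_mul]
      rw [Finset.sum_comm]
      refine Finset.sum_congr rfl fun γ _ => Finset.sum_congr rfl fun α _ => ?_
      rw [mul_comm (U γ α) (R' α β), mulOp_mul, ← mul_assoc]
    rw [l1]
    have l2 : ∀ γ : Fin (N - 1), mulOp (∑ α : Fin (N - 1), U γ α * R' α β) * Pb γ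
        = mulOp (X 1 * X 0 * pderiv 0 (U γ β)) * Pb γ
          + ∑ α : Fin (N - 1), mulOp (U α β) * (mulOp (R γ α) * Pb γ) := by
      intro γ
      rw [hkey γ, mulOp_add, add_mul, mulOp_sum, Finset.sum_mul, add_comm]
      congr 1
      refine Finset.sum_congr rfl fun α _ => ?_
      rw [mul_comm (R γ α) (U α β), mulOp_mul, mul_assoc]
    simp_rw [l2]
    rw [Finset.sum_add_distrib, Finset.sum_comm]
  rw [e1, e2]
  abel


end
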